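/- Let G = (V, E, src, tgt, v0, S, 𝕐, λ) be a world graph and I¹, I² itinerary DFAs over G. A sensor selection M ⊆ S satisfies the conflation constraint (I¹, I²)^~ (i.e., for every w ∈ Walks(G) ∩ L(I¹) there exists c_w ∈ Walks(G) ∩ L(I²) with β_G(w, M) = β_G(c_w, M)) if and only if the language of the first signature automaton is contained in that of the second: L(S_{G,I¹,M}) ⊆ L(S_{G,I²,M}). -/

import Mathlib

attribute [local instance] Classical.propDecidable

/-- A world graph: an edge-labelled directed multigraph with an initial vertex,
a nonempty finite set of sensors, pairwise disjoint event sets for the sensors,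
and a labelling of edges by sets of events drawn from the sensors' event sets. -/
structure WorldGraph (V E S Ev : Type) where
  src : E → V
  tgt : E → V
  v0 : V
  sensors : Finset S
  sensors_nonempty : sensors.Nonempty
  events : S → Set Ev
  events_disjoint : ∀ s ∈ sensors, ∀ t ∈ sensors, s ≠ t → Disjoint (events s) (events t)
  lab : E → Set Ev
  lab_sub : ∀ e, lab e ⊆ ⋃ s ∈ sensors, events s

namespace WorldGraph

variable {V E S Ev Q : Type}

/-- A walk: a string of edges starting at the initial vertex with matching endpoints. -/
def IsWalk (G : WorldGraph V E S Ev) (w : List E) : Prop :=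
  (∀ e ∈ w.head?, G.src e = G.v0) ∧ w.Chain' fun a b => G.tgt a = G.src b

/-- The set of all events producible by sensors in the selection `M`. -/
def YM (G : WorldGraph V E S Ev) (M : Finset S) : Set Ev := ⋃ s ∈ M, G.events s

/-- The sensor labelling function: `some (λ(e) ∩ Y_M)` if that set is nonempty, else
`none` (representing the empty symbol ε). -/
noncomputable def labM (G : WorldGraph V E S Ev) (M : Finset S) (e : E) : Option (Set Ev) :=
  if (G.lab e ∩ G.YM M).Nonempty then some (G.lab e ∩ G.YM M) else none

/-- The signature of a walk: the string of nonempty sensor labels, ε symbols dropped. -/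
noncomputable def signature (G : WorldGraph V E S Ev) (M : Finset S) (w : List E) :
    List (Set Ev) :=
  w.filterMap (G.labM M)

/-- One step of the (partial) product automaton of world graph `G` and itinerary DFA `I`. -/
noncomputable def prodStep (G : WorldGraph V E S Ev) (I : DFA E Q) (p : Q × V) (e : E) :
    Option (Q × V) :=
  if G.src e = p.2 then some (I.step p.1 e, G.tgt e) else none

/-- Tracing a string of edges through the product automaton from the initial state;
`none` means some transition was undefined (⊥). -/
noncomputable def prodEval (G : WorldGraph V E S Ev) (I : DFA E Q) (w : List E) :
    Option (Q × V) :=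
  w.foldl (fun o e => o.bind fun p => G.prodStep I p e) (some (I.start, G.v0))

/-- The language of the product automaton: strings traceable from `(q0, v0)` without
producing ⊥ which arrive at an accepting state. -/
def ProdAccepts (G : WorldGraph V E S Ev) (I : DFA E Q) (w : List E) : Prop :=
  ∃ p, G.prodEval I w = some p ∧ p.1 ∈ I.accept

/-- The signature automaton: an ε-NFA over the alphabet of sensor labels, with the
states, initial state, and accepting states of the product automaton. -/
noncomputable def sigNFA (G : WorldGraph V E S Ev) (I : DFA E Q) (M : Finset S) :
    εNFA (Set Ev) (Q × V) where
  step := fun p σ => { p' | ∃ e, G.prodStep I p e = some p' ∧ G.labM M e = σ }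
  start := {(I.start, G.v0)}
  accept := { p | p.1 ∈ I.accept }

/-- `M` satisfies the discrimination constraint `[I¹, I²]^≁`. -/
def SatisfiesDiscrimination {Q₁ Q₂ : Type} (G : WorldGraph V E S Ev)
    (I₁ : DFA E Q₁) (I₂ : DFA E Q₂) (M : Finset S) : Prop :=
  ¬ ∃ w₁ w₂ : List E, (G.IsWalk w₁ ∧ w₁ ∈ I₁.accepts) ∧ (G.IsWalk w₂ ∧ w₂ ∈ I₂.accepts) ∧
      G.signature M w₁ = G.signature M w₂

/-- `M` satisfies the conflation constraint `(I¹, I²)^~`. -/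
def SatisfiesConflation {Q₁ Q₂ : Type} (G : WorldGraph V E S Ev)
    (I₁ : DFA E Q₁) (I₂ : DFA E Q₂) (M : Finset S) : Prop :=
  ∀ w : List E, G.IsWalk w → w ∈ I₁.accepts →
    ∃ c : List E, G.IsWalk c ∧ c ∈ I₂.accepts ∧ G.signature M w = G.signature M c

end WorldGraph

/-!
The signature automaton is the product automaton with every edge relabelled by its sensor label,
edges with label ε becoming ε-moves. Hence its accepting paths are exactly the accepting runs of
the product automaton, i.e. the walks accepted by the itinerary DFA, and its language is the set
of their signatures. Conflation says precisely that every signature of the first kind is one of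
the second.
-/

namespace WorldGraph

variable {V E S Ev Q : Type} (G : WorldGraph V E S Ev) (I : DFA E Q) (M : Finset S)

def IsWalkFrom (v : V) (w : List E) : Prop :=
  (∀ e ∈ w.head?, G.src e = v) ∧ w.IsChain fun a b => G.tgt a = G.src b

theorem isWalk_iff_isWalkFrom {w : List E} : G.IsWalk w ↔ G.IsWalkFrom G.v0 w := Iff.rfl

@[simp]
theorem isWalkFrom_nil (v : V) : G.IsWalkFrom v [] := by
  simp [IsWalkFrom]

@[simp]
theorem isWalkFrom_cons {v : V} {e : E} {w : List E} :
    G.IsWalkFrom v (e :: w) ↔ G.src e = v ∧ G.IsWalkFrom (G.tgt e) w := by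
  simp only [IsWalkFrom, List.head?_cons, Option.mem_def, Option.some.injEq, forall_eq',
    List.isChain_cons, eq_comm (a := G.tgt e)]

theorem foldlM_prodStep_eq_some_iff {w : List E} {q : Q} {v : V} {p : Q × V} :
    w.foldlM (G.prodStep I) (q, v) = some p ↔
      G.IsWalkFrom v w ∧ p = (I.evalFrom q w, w.foldl (fun _ e => G.tgt e) v) := by
  induction w generalizing q v with
  | nil => simp [eq_comm]
  | cons e w ih =>
    by_cases he : G.src e = v
    · simp [prodStep, he, ih]
    · simp [prodStep, he]

theorem prodEval_eq_foldlM (w : List E) :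
    G.prodEval I w = w.foldlM (G.prodStep I) (I.start, G.v0) := by
  rw [List.foldlM_eq_foldl]
  rfl

theorem prodAccepts_iff {w : List E} : G.ProdAccepts I w ↔ G.IsWalk w ∧ w ∈ I.accepts := by
  simp [ProdAccepts, prodEval_eq_foldlM, foldlM_prodStep_eq_some_iff, isWalk_iff_isWalkFrom,
    DFA.mem_accepts, DFA.eval]

theorem isPath_sigNFA_iff {x : List (Option (Set Ev))} {p p' : Q × V} :
    (G.sigNFA I M).IsPath p p' x ↔
      ∃ w : List E, w.foldlM (G.prodStep I) p = some p' ∧ w.map (G.labM M) = x := by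
  induction x generalizing p with
  | nil =>
    rw [εNFA.isPath_nil]
    constructor
    · rintro rfl
      exact ⟨[], rfl, rfl⟩
    · rintro ⟨w, hw, hx⟩
      rw [List.map_eq_nil_iff] at hx
      subst hx
      exact Option.some.inj hw
  | cons a x ih =>
    constructor
    · rintro (_ | ⟨t, _, _, _, _, ⟨e, he, rfl⟩, ht⟩)
      obtain ⟨w, hw, rfl⟩ := ih.1 ht
      exact ⟨e :: w, by simp [he, hw], rfl⟩
    · rintro ⟨_ | ⟨e, w⟩, hw, hx⟩
      · simp at hx
      · obtain ⟨rfl, rfl⟩ := List.cons_eq_cons.1 hx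
        obtain ⟨t, he, hw⟩ := Option.bind_eq_some_iff.1 hw
        exact .cons t p p' _ _ ⟨e, he, rfl⟩ (ih.2 ⟨w, hw, rfl⟩)

theorem signature_eq_reduceOption (w : List E) :
    G.signature M w = (w.map (G.labM M)).reduceOption := by
  simp [signature, List.reduceOption, List.filterMap_map]

theorem mem_sigNFA_accepts_iff_exists_prodAccepts {x : List (Set Ev)} :
    x ∈ (G.sigNFA I M).accepts ↔ ∃ w, G.ProdAccepts I w ∧ G.signature M w = x := by
  simp only [εNFA.mem_accepts_iff_exists_path, isPath_sigNFA_iff, ProdAccepts,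
    prodEval_eq_foldlM, signature_eq_reduceOption]
  constructor
  · rintro ⟨_, p, _, rfl, hp, rfl, w, hw, rfl⟩
    exact ⟨w, ⟨p, hw, hp⟩, rfl⟩
  · rintro ⟨w, ⟨p, hw, hp⟩, rfl⟩
    exact ⟨_, p, _, rfl, hp, rfl, w, hw, rfl⟩

theorem mem_sigNFA_accepts_iff {x : List (Set Ev)} :
    x ∈ (G.sigNFA I M).accepts ↔
      ∃ w, G.IsWalk w ∧ w ∈ I.accepts ∧ G.signature M w = x := by
  simp only [mem_sigNFA_accepts_iff_exists_prodAccepts, prodAccepts_iff, and_assoc]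

end WorldGraph


theorem satisfiesConflation_iff_sig_language_subset_general
    (V E S Ev Q₁ Q₂ : Type) (G : WorldGraph V E S Ev)
    (I₁ : DFA E Q₁) (I₂ : DFA E Q₂) (M : Finset S) :
    G.SatisfiesConflation I₁ I₂ M ↔
      (G.sigNFA I₁ M).accepts ≤ (G.sigNFA I₂ M).accepts := by
  constructor
  · intro h x hx
    obtain ⟨w, hw, hacc, rfl⟩ := (G.mem_sigNFA_accepts_iff I₁ M).1 hx
    obtain ⟨c, hc, hcacc, hsig⟩ := h w hw hacc
    exact (G.mem_sigNFA_accepts_iff I₂ M).2 ⟨c, hc, hcacc, hsig.symm⟩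
  · intro h w hw hacc
    have hsig₁ := (G.mem_sigNFA_accepts_iff I₁ M).2 ⟨w, hw, hacc, rfl⟩
    obtain ⟨c, hc, hcacc, hsig⟩ := (G.mem_sigNFA_accepts_iff I₂ M).1 (h hsig₁)
    exact ⟨c, hc, hcacc, hsig.symm⟩

/-- `M` satisfies the conflation constraint `(I¹, I²)^~` iff the language
of the first signature automaton is contained in that of the second. -/
theorem satisfiesConflation_iff_sig_language_subset
    (V E S Ev Q₁ Q₂ : Type) (G : WorldGraph V E S Ev)
    (I₁ : DFA E Q₁) (I₂ : DFA E Q₂) (M : Finset S) (hM : M ⊆ G.sensors) :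
    G.SatisfiesConflation I₁ I₂ M ↔
      (G.sigNFA I₁ M).accepts ≤ (G.sigNFA I₂ M).accepts :=
  satisfiesConflation_iff_sig_language_subset_general V E S Ev Q₁ Q₂ G I₁ I₂ M
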